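/- arXiv:1907.03751 — 4 statements merged into one kernel-verified Lean document; each statement's English description precedes it below -/
import Mathlib

section
/- If n ≥ 3, r and a are positive integers with r² ≡ -1 (mod n) and r·a ≡ a or -a (mod n), and 1 ≤ a ≤ ⌈n/2⌉ with a ≠ n (in particular a < n), then n is even, a is odd, and n = 2a. -/
/-!
Multiplying `r * a ≡ ±a` by `r` gives `r² a ≡ a`, while `r² ≡ -1` gives `r² a ≡ -a`; hence
`n ∣ 2a`, and `0 < 2a < 2n` forces `n = 2a`. If `a` were even, `4 ∣ n` and `-1` would be a
square modulo `4`, which it is not.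
-/

theorem Int.dvd_two_mul_of_sq_modEq_neg_one {n a r : ℤ} (hr : r ^ 2 ≡ -1 [ZMOD n])
    (hra : r * a ≡ a [ZMOD n] ∨ r * a ≡ -a [ZMOD n]) : n ∣ 2 * a := by
  have hsq_neg : r ^ 2 * a ≡ -a [ZMOD n] := by simpa using hr.mul_right a
  have hsq : r ^ 2 * a ≡ a [ZMOD n] := by
    rcases hra with h | h
    · calc r ^ 2 * a = r * (r * a) := by ring
        _ ≡ r * a [ZMOD n] := h.mul_left r
        _ ≡ a [ZMOD n] := h
    · calc r ^ 2 * a = r * (r * a) := by ring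
        _ ≡ r * -a [ZMOD n] := h.mul_left r
        _ = -(r * a) := by ring
        _ ≡ -(-a) [ZMOD n] := h.neg
        _ = a := neg_neg a
  have := (hsq.symm.trans hsq_neg).dvd
  rwa [show -a - a = -(2 * a) by ring, dvd_neg] at this

theorem Int.not_sq_modEq_neg_one_four (r : ℤ) : ¬ r ^ 2 ≡ -1 [ZMOD 4] := by
  intro h
  have hsq : ∀ x : ZMod 4, x ^ 2 ≠ -1 := by decide
  exact hsq r (by exact_mod_cast (ZMod.intCast_eq_intCast_iff' _ _ 4).mpr h)

theorem stmt_0_general (n a r : ℕ) (hn : 3 ≤ n) (ha1 : 1 ≤ a)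
    (ha2 : a ≤ (n + 1) / 2)
    (hr : Int.ModEq (n : ℤ) ((r : ℤ) ^ 2) (-1))
    (hra : Int.ModEq (n : ℤ) ((r : ℤ) * a) (a : ℤ) ∨
           Int.ModEq (n : ℤ) ((r : ℤ) * a) (-(a : ℤ))) :
    Even n ∧ Odd a ∧ n = 2 * a := by
  have hdvd : n ∣ 2 * a := by exact_mod_cast Int.dvd_two_mul_of_sq_modEq_neg_one hr hra
  have hn_eq : n = 2 * a := (Nat.eq_of_dvd_of_lt_two_mul (by omega) hdvd (by omega)).symm
  have ha_odd : Odd a := by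
    rw [← Nat.not_even_iff_odd]
    rintro ⟨m, rfl⟩
    exact Int.not_sq_modEq_neg_one_four r (hr.of_dvd ⟨m, by push_cast [hn_eq]; ring⟩)
  exact ⟨⟨a, by omega⟩, ha_odd, hn_eq⟩

/-- If n ≥ 3, r, a positive with r² ≡ -1 (mod n), r·a ≡ ±a (mod n),
1 ≤ a, r ≤ ⌈n/2⌉ and a ≠ n, then n is even, a is odd and n = 2a. -/
theorem stmt_0 (n a r : ℕ) (hn : 3 ≤ n) (ha1 : 1 ≤ a) (hr1 : 1 ≤ r)
    (ha2 : a ≤ (n + 1) / 2) (hr2 : r ≤ (n + 1) / 2) (han : a ≠ n)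
    (hr : Int.ModEq (n : ℤ) ((r : ℤ) ^ 2) (-1))
    (hra : Int.ModEq (n : ℤ) ((r : ℤ) * a) (a : ℤ) ∨
           Int.ModEq (n : ℤ) ((r : ℤ) * a) (-(a : ℤ))) :
    Even n ∧ Odd a ∧ n = 2 * a :=
  stmt_0_general n a r hn ha1 ha2 hr hra
end

section
/- Let n ≥ 3, 1 ≤ a, r ≤ n-1 with r² ≡ 1 (mod n) and r·a ≡ -a (mod n). Define maps ρ and δ on the vertex set V = {A_i, B_i : i ∈ ℤ_n} of the rose window graph R_n(a,r) by ρ(A_i)=A_{i+1}, ρ(B_i)=B_{i+1}, δ(A_i)=B_{ri}, δ(B_i)=A_{ri}. Then the group H = ⟨ρ, δ⟩ acts regularly on V; hence R_n(a,r) is a Cayley graph. -/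
/-!
Rotations `A_i ↦ A_{i+k}`, `B_i ↦ B_{i+k}` are automorphisms of every rose window graph, and
`r² = 1`, `r a = -a` make `δ` an involutive automorphism: it maps rim edges to
hub edges and inspokes to inspokes, while an outspoke `B_i A_{i+a}` goes to `A_{ri} B_{ri-a}`,
again an outspoke. Since `δ ρ_k δ = ρ_{rk}`, the group `⟨ρ, δ⟩` consists of the rotations `ρ_k`
and the maps `ρ_k δ`. The rotations preserve the two sides `{A_i}`, `{B_i}` and the maps `ρ_k δ`
exchange them, so the stabiliser of `A_0` is trivial, while `ρ_i` and `ρ_i δ` carry `A_0` to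
`A_i` and `B_i`: the action is regular.
-/

/-- One-directional edge relation of the rose window graph: rim edges A_iA_{i+1},
inspoke edges A_iB_i, outspoke edges B_iA_{i+a}, hub edges B_iB_{i+r},
with A_i = Sum.inl i and B_i = Sum.inr i. -/
def rwRel (n : ℕ) (a r : ZMod n) : (ZMod n ⊕ ZMod n) → (ZMod n ⊕ ZMod n) → Prop
  | Sum.inl i, Sum.inl j => j = i + 1      -- rim
  | Sum.inl i, Sum.inr j => j = i          -- inspoke
  | Sum.inr i, Sum.inl j => j = i + a      -- outspoke
  | Sum.inr i, Sum.inr j => j = i + r      -- hub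

/-- The rose window graph R_n(a,r). -/
def roseWindow (n : ℕ) (a r : ZMod n) : SimpleGraph (ZMod n ⊕ ZMod n) :=
  SimpleGraph.fromRel (rwRel n a r)

open Function

theorem MulAction.existsUnique_mem_smul_eq {G α : Type*} [Group G] [MulAction G α]
    {H : Subgroup G} (x₀ : α) (hx₀ : ∀ v, ∃ g ∈ H, g • x₀ = v)
    (hfree : ∀ g ∈ H, g • x₀ = x₀ → g = 1) (v w : α) :
    ∃! g, g ∈ H ∧ g • v = w := by
  obtain ⟨gv, hgv, rfl⟩ := hx₀ v
  obtain ⟨gw, hgw, rfl⟩ := hx₀ w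
  refine ⟨gw * gv⁻¹, ⟨H.mul_mem hgw (H.inv_mem hgv), by simp [mul_smul]⟩, ?_⟩
  rintro g ⟨hg, hgx⟩
  have hfix : gw⁻¹ * g * gv = 1 :=
    hfree _ (H.mul_mem (H.mul_mem (H.inv_mem hgw) hg) hgv) (by simp [mul_smul, hgx])
  rw [mul_assoc, inv_mul_eq_one] at hfix
  exact eq_mul_inv_iff_mul_eq.2 hfix.symm

theorem Function.Involutive.rel_or_rel_swap_iff {V : Type*} {R : V → V → Prop} {f : V → V}
    (hf : Involutive f) (h : ∀ v w, R v w → R (f v) (f w) ∨ R (f w) (f v)) (v w : V) :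
    R (f v) (f w) ∨ R (f w) (f v) ↔ R v w ∨ R w v := by
  have key : ∀ v w, R v w ∨ R w v → R (f v) (f w) ∨ R (f w) (f v) := fun v w =>
    Or.rec (h v w) fun hwv => (h w v hwv).symm
  refine ⟨fun hvw => ?_, key v w⟩
  simpa only [hf v, hf w] using key (f v) (f w) hvw

def SimpleGraph.fromRelIso {V W : Type*} {R : V → V → Prop} {S : W → W → Prop} (e : V ≃ W)
    (h : ∀ v w, S (e v) (e w) ∨ S (e w) (e v) ↔ R v w ∨ R w v) :
    SimpleGraph.fromRel R ≃g SimpleGraph.fromRel S where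
  toEquiv := e
  map_rel_iff' {v w} := by simp only [SimpleGraph.fromRel_adj, e.injective.ne_iff, h]

namespace roseWindow

variable {n : ℕ} {a r : ZMod n}

theorem rwRel_map_add_iff (k : ZMod n) (v w : ZMod n ⊕ ZMod n) :
    rwRel n a r (Sum.map (· + k) (· + k) v) (Sum.map (· + k) (· + k) w) ↔ rwRel n a r v w := by
  rcases v with i | i <;> rcases w with j | j <;>
    simp only [rwRel, Sum.map_inl, Sum.map_inr] <;>
    exact ⟨fun h => by linear_combination h, fun h => by linear_combination h⟩

def rotation (k : ZMod n) : roseWindow n a r ≃g roseWindow n a r :=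
  SimpleGraph.fromRelIso (Equiv.sumCongr (Equiv.addRight k) (Equiv.addRight k)) fun v w =>
    or_congr (rwRel_map_add_iff k v w) (rwRel_map_add_iff k w v)

@[simp] theorem rotation_inl (k i : ZMod n) :
    rotation (a := a) (r := r) k (Sum.inl i) = Sum.inl (i + k) := rfl

@[simp] theorem rotation_inr (k i : ZMod n) :
    rotation (a := a) (r := r) k (Sum.inr i) = Sum.inr (i + k) := rfl

theorem rotation_add (k l : ZMod n) :
    rotation (a := a) (r := r) (k + l) = rotation k * rotation l := by
  ext (i | i) <;> simp [add_left_comm, add_comm]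

theorem rotation_zero : rotation (a := a) (r := r) 0 = 1 := by
  ext (i | i) <;> simp

def rotationHom : Multiplicative (ZMod n) →* (roseWindow n a r ≃g roseWindow n a r) where
  toFun k := rotation k.toAdd
  map_one' := rotation_zero
  map_mul' k l := rotation_add k.toAdd l.toAdd

theorem rotation_neg (k : ZMod n) :
    rotation (a := a) (r := r) (-k) = (rotation k)⁻¹ :=
  map_inv (rotationHom (a := a) (r := r)) (.ofAdd k)

theorem rotation_eq_zpow (k : ZMod n) :
    rotation (a := a) (r := r) k = rotation 1 ^ (k.cast : ℤ) := by
  conv_lhs => rw [← ZMod.intCast_zmod_cast k, ← zsmul_one]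
  exact map_zpow (rotationHom (a := a) (r := r)) (.ofAdd 1) _

def reflect (r : ZMod n) : ZMod n ⊕ ZMod n → ZMod n ⊕ ZMod n
  | .inl i => .inr (r * i)
  | .inr i => .inl (r * i)

theorem reflect_involutive (hr : r ^ 2 = 1) : Involutive (reflect r) := by
  rintro (i | i) <;> simp only [reflect, Sum.inl.injEq, Sum.inr.injEq] <;>
    linear_combination i * hr

theorem rwRel_reflect (hr : r ^ 2 = 1) (hra : r * a = -a) {v w : ZMod n ⊕ ZMod n}
    (h : rwRel n a r v w) :
    rwRel n a r (reflect r v) (reflect r w) ∨ rwRel n a r (reflect r w) (reflect r v) := by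
  rcases v with i | i <;> rcases w with j | j <;> simp only [rwRel, reflect] at h ⊢
  · left; linear_combination r * h
  · right; linear_combination (-r) * h
  · right; linear_combination (-r) * h - hra
  · left; linear_combination r * h + hr

def reflection (hr : r ^ 2 = 1) (hra : r * a = -a) : roseWindow n a r ≃g roseWindow n a r :=
  SimpleGraph.fromRelIso (reflect_involutive hr).toPerm
    ((reflect_involutive hr).rel_or_rel_swap_iff fun _ _ => rwRel_reflect hr hra)

section reflection

variable (hr : r ^ 2 = 1) (hra : r * a = -a)

@[simp] theorem reflection_inl (i : ZMod n) :
    reflection hr hra (Sum.inl i) = Sum.inr (r * i) := rfl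

@[simp] theorem reflection_inr (i : ZMod n) :
    reflection hr hra (Sum.inr i) = Sum.inl (r * i) := rfl

theorem reflection_mul_self : reflection hr hra * reflection hr hra = 1 :=
  RelIso.ext (reflect_involutive hr)

theorem reflection_mul_rotation (k : ZMod n) :
    reflection hr hra * rotation k = rotation (r * k) * reflection hr hra := by
  ext (i | i) <;> simp [mul_add]

def rotationReflection : Subgroup (roseWindow n a r ≃g roseWindow n a r) where
  carrier := {g | ∃ k, g = rotation k ∨ g = rotation k * reflection hr hra}
  one_mem' := ⟨0, .inl rotation_zero.symm⟩
  mul_mem' := by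
    rintro _ _ ⟨k, rfl | rfl⟩ ⟨l, rfl | rfl⟩
    · exact ⟨k + l, .inl (rotation_add k l).symm⟩
    · exact ⟨k + l, .inr (by rw [rotation_add, mul_assoc])⟩
    · refine ⟨k + r * l, .inr ?_⟩
      rw [mul_assoc, reflection_mul_rotation, rotation_add, mul_assoc]
    · refine ⟨k + r * l, .inl ?_⟩
      rw [mul_assoc, ← mul_assoc (reflection hr hra), reflection_mul_rotation, mul_assoc,
        reflection_mul_self, mul_one, rotation_add]
  inv_mem' := by
    rintro _ ⟨k, rfl | rfl⟩
    · exact ⟨-k, .inl (rotation_neg k).symm⟩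
    · refine ⟨r * -k, .inr ?_⟩
      rw [mul_inv_rev, ← rotation_neg, inv_eq_of_mul_eq_one_right (reflection_mul_self hr hra),
        reflection_mul_rotation]

theorem closure_rotation_reflection :
    Subgroup.closure {rotation 1, reflection hr hra} = rotationReflection hr hra := by
  refine le_antisymm (Subgroup.closure_le _ |>.2 ?_) ?_
  · rintro _ (rfl | rfl)
    · exact ⟨1, .inl rfl⟩
    · exact ⟨0, .inr (by rw [rotation_zero, one_mul])⟩
  · have hrot (k : ZMod n) : rotation k ∈ Subgroup.closure {rotation 1, reflection hr hra} :=
      rotation_eq_zpow k ▸ zpow_mem (Subgroup.subset_closure (.inl rfl)) _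
    rintro _ ⟨k, rfl | rfl⟩
    · exact hrot k
    · exact mul_mem (hrot k) (Subgroup.subset_closure (.inr rfl))

theorem exists_mem_rotationReflection_smul_inl_zero (v : ZMod n ⊕ ZMod n) :
    ∃ g ∈ rotationReflection hr hra, g • Sum.inl 0 = v := by
  rcases v with i | i
  · exact ⟨rotation i, ⟨i, .inl rfl⟩, by simp⟩
  · exact ⟨rotation i * reflection hr hra, ⟨i, .inr rfl⟩, by simp⟩

theorem eq_one_of_mem_rotationReflection_of_smul_inl_zero
    (g : roseWindow n a r ≃g roseWindow n a r) (hg : g ∈ rotationReflection hr hra)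
    (hfix : g • (Sum.inl 0 : ZMod n ⊕ ZMod n) = Sum.inl 0) : g = 1 := by
  obtain ⟨k, rfl | rfl⟩ := hg
  · obtain rfl : k = 0 := by simpa using hfix
    exact rotation_zero
  · simp at hfix

end reflection

end roseWindow

theorem stmt_8_general (n : ℕ) (a r : ℕ)
    (hr : ((r : ZMod n)) ^ 2 = 1) (hra : (r : ZMod n) * a = -(a : ZMod n)) :
    ∃ ρ δ : roseWindow n a r ≃g roseWindow n a r,
      (∀ i : ZMod n, ρ (Sum.inl i) = Sum.inl (i + 1)) ∧
      (∀ i : ZMod n, ρ (Sum.inr i) = Sum.inr (i + 1)) ∧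
      (∀ i : ZMod n, δ (Sum.inl i) = Sum.inr ((r : ZMod n) * i)) ∧
      (∀ i : ZMod n, δ (Sum.inr i) = Sum.inl ((r : ZMod n) * i)) ∧
      ∀ v w : ZMod n ⊕ ZMod n,
        ∃! h : (roseWindow n a r ≃g roseWindow n a r),
          h ∈ Subgroup.closure {ρ, δ} ∧ h v = w := by
  refine ⟨roseWindow.rotation 1, roseWindow.reflection hr hra,
    fun _ => rfl, fun _ => rfl, fun _ => rfl, fun _ => rfl, ?_⟩
  rw [roseWindow.closure_rotation_reflection]
  exact MulAction.existsUnique_mem_smul_eq (Sum.inl 0)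
    (roseWindow.exists_mem_rotationReflection_smul_inl_zero hr hra)
    (roseWindow.eq_one_of_mem_rotationReflection_of_smul_inl_zero hr hra)

/-- If r² ≡ 1 (mod n) and r·a ≡ -a (mod n), then there are graph
automorphisms ρ, δ of R_n(a,r) given by ρ(A_i)=A_{i+1}, ρ(B_i)=B_{i+1},
δ(A_i)=B_{ri}, δ(B_i)=A_{ri}, and the subgroup H = ⟨ρ, δ⟩ of the automorphism
group acts regularly on the vertices; hence R_n(a,r) is a Cayley graph. -/
theorem stmt_8 (n : ℕ) (hn : 3 ≤ n) (a r : ℕ) (ha : 1 ≤ a) (han : a ≤ n - 1)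
    (hr1 : 1 ≤ r) (hrn : r ≤ n - 1)
    (hr : ((r : ZMod n)) ^ 2 = 1) (hra : (r : ZMod n) * a = -(a : ZMod n)) :
    ∃ ρ δ : roseWindow n a r ≃g roseWindow n a r,
      (∀ i : ZMod n, ρ (Sum.inl i) = Sum.inl (i + 1)) ∧
      (∀ i : ZMod n, ρ (Sum.inr i) = Sum.inr (i + 1)) ∧
      (∀ i : ZMod n, δ (Sum.inl i) = Sum.inr ((r : ZMod n) * i)) ∧
      (∀ i : ZMod n, δ (Sum.inr i) = Sum.inl ((r : ZMod n) * i)) ∧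
      ∀ v w : ZMod n ⊕ ZMod n,
        ∃! h : (roseWindow n a r ≃g roseWindow n a r),
          h ∈ Subgroup.closure {ρ, δ} ∧ h v = w :=
  stmt_8_general n a r hr hra
end

section
/- If gcd(n, r) = 1, then the map ζ with ζ(A_i) = B_{-i·r⁻¹}, ζ(B_i) = A_{-i·r⁻¹} (r⁻¹ the inverse of r mod n) is a graph isomorphism from R_n(a, r) to R_n(a·r⁻¹, r⁻¹). -/
def SimpleGraph.Iso.fromRelOfReverse {V W : Type*} {r : V → V → Prop} {s : W → W → Prop}
    (e : V ≃ W) (h : ∀ x y, s (e y) (e x) ↔ r x y) :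
    SimpleGraph.fromRel r ≃g SimpleGraph.fromRel s where
  toEquiv := e
  map_rel_iff' {x y} := by
    simp only [SimpleGraph.fromRel_adj, e.injective.ne_iff, h, or_comm]

lemma neg_mul_inv_eq_neg_mul_inv_add_iff {R : Type*} [CommRing R] (u : Rˣ) (i j c : R) :
    -j * ↑u⁻¹ = -i * ↑u⁻¹ + c ↔ i = j + c * u := by
  rw [← Units.mul_left_inj u, add_mul, mul_assoc, mul_assoc, Units.inv_mul, mul_one, mul_one]
  constructor <;> intro h <;> linear_combination h

section roseWindowFlip

variable {n : ℕ} (u : (ZMod n)ˣ)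

def roseWindowFlip : ZMod n ⊕ ZMod n ≃ ZMod n ⊕ ZMod n :=
  let φ := (Equiv.neg (ZMod n)).trans (Units.mulRight u⁻¹)
  (Equiv.sumComm _ _).trans (Equiv.sumCongr φ φ)

@[simp]
lemma roseWindowFlip_inl (i : ZMod n) : roseWindowFlip u (Sum.inl i) = Sum.inr (-i * ↑u⁻¹) :=
  rfl

@[simp]
lemma roseWindowFlip_inr (i : ZMod n) : roseWindowFlip u (Sum.inr i) = Sum.inl (-i * ↑u⁻¹) :=
  rfl

lemma rwRel_roseWindowFlip_iff (a : ZMod n) (x y : ZMod n ⊕ ZMod n) :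
    rwRel n (a * ↑u⁻¹) ↑u⁻¹ (roseWindowFlip u y) (roseWindowFlip u x) ↔ rwRel n a u x y := by
  rcases x with i | i <;> rcases y with j | j <;>
    simp only [roseWindowFlip_inl, roseWindowFlip_inr, rwRel]
  case inl.inl => rw [neg_mul_inv_eq_neg_mul_inv_add_iff, Units.inv_mul]
  case inl.inr => rw [Units.mul_left_inj, neg_inj, eq_comm]
  case inr.inl => rw [neg_mul_inv_eq_neg_mul_inv_add_iff, mul_assoc, Units.inv_mul, mul_one]
  case inr.inr => rw [neg_mul_inv_eq_neg_mul_inv_add_iff, one_mul]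

end roseWindowFlip

/-- If r is invertible mod n (gcd(n,r)=1), then
ζ(A_i) = B_{-i·r⁻¹}, ζ(B_i) = A_{-i·r⁻¹} is a graph isomorphism from
R_n(a,r) to R_n(a·r⁻¹, r⁻¹). -/
theorem stmt_12 (n : ℕ) (a r : ZMod n) (hr : IsUnit r) :
    ∃ ζ : roseWindow n a r ≃g roseWindow n (a * r⁻¹) r⁻¹,
      (∀ i : ZMod n, ζ (Sum.inl i) = Sum.inr (-i * r⁻¹)) ∧
      (∀ i : ZMod n, ζ (Sum.inr i) = Sum.inl (-i * r⁻¹)) := by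
  obtain ⟨u, rfl⟩ := hr
  rw [ZMod.inv_coe_unit]
  exact ⟨.fromRelOfReverse (roseWindowFlip u) (rwRel_roseWindowFlip_iff u a),
    roseWindowFlip_inl u, roseWindowFlip_inr u⟩
end

section
/- Let n = 12m with m ≡ 2 (mod 12), and let β = ρ^{3m/2}, where ρ generates a cyclic group of order n. Then β has order 8, and for γ satisfying γ² = ρ^{4m+4}, the elements ρ^{4(m+1)t + 3j·m/2} for 0 ≤ t ≤ (m-1)/2 (integer t with 2t ≤ m-1) and j ∈ {0,…,7} equal the identity only when t = 0 and j = 0. -/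
/-!
Write `m = 2k` with `k` odd. Then `3m/2 = 3k` and `12m = 8 · 3k`, so `3m/2` has additive order `8`.
Reducing `24k ∣ 4(2k+1)t + 3jk` modulo `k` gives `k ∣ 4t`, hence `k ∣ t` as `k` is odd,
so `t = 0` because `t < k`; what is left is `24k ∣ 3jk`, i.e. `8 ∣ j`, so `j = 0`.
-/

lemma ZMod.addOrderOf_natCast_mul_self (c : ℕ) {d : ℕ} (hd : d ≠ 0) :
    addOrderOf (d : ZMod (c * d)) = c := by
  rw [ZMod.addOrderOf_coe' _ hd, Nat.gcd_mul_left_left,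
    Nat.mul_div_cancel _ (Nat.pos_of_ne_zero hd)]

lemma eq_zero_of_twentyFour_mul_dvd {k t j : ℕ} (hk : Odd k) (ht : t < k) (hj : j < 8)
    (h : 24 * k ∣ 4 * (2 * k + 1) * t + 3 * j * k) : t = 0 ∧ j = 0 := by
  have hk4t : k ∣ 4 * t := by
    have hsum : k ∣ 4 * t + k * (8 * t + 3 * j) := by
      rw [show 4 * t + k * (8 * t + 3 * j) = 4 * (2 * k + 1) * t + 3 * j * k by ring]
      exact (Dvd.intro_left 24 rfl).trans h
    exact (Nat.dvd_add_left (Dvd.intro _ rfl)).mp hsum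
  have hkt : k ∣ t := (hk.coprime_two_right.pow_right 2).dvd_of_dvd_mul_left hk4t
  obtain rfl : t = 0 := Nat.eq_zero_of_dvd_of_lt hkt ht
  have h8j : 8 ∣ j := by
    rw [show 24 * k = 3 * k * 8 by ring,
      show 4 * (2 * k + 1) * 0 + 3 * j * k = 3 * k * j by ring] at h
    exact Nat.dvd_of_mul_dvd_mul_left (Nat.mul_pos three_pos hk.pos) h
  omega

/-- Let n = 12m with m ≡ 2 (mod 12). Then β = ρ^{3m/2} (ρ a
generator of the cyclic group of order n, here modelled additively as ZMod n)
has order 8, and ρ^{4(m+1)t + 3j·m/2} = 1 with 0 ≤ 2t ≤ m-1 and 0 ≤ j ≤ 7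
forces t = 0 and j = 0; equivalently, if 12m ∣ 4(m+1)t + 3j(m/2) then
t = 0 and j = 0. -/
theorem stmt_19 (m : ℕ) (hm : m % 12 = 2) :
    addOrderOf ((3 * m / 2 : ℕ) : ZMod (12 * m)) = 8 ∧
    ∀ t j : ℕ, 2 * t ≤ m - 1 → j ≤ 7 →
      12 * m ∣ 4 * (m + 1) * t + 3 * j * (m / 2) → t = 0 ∧ j = 0 := by
  obtain ⟨k, rfl⟩ : ∃ k, m = 2 * k := ⟨m / 2, by omega⟩
  have hk : Odd k := Nat.odd_iff.mpr (by omega)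
  refine ⟨?_, fun t j ht hj h => eq_zero_of_twentyFour_mul_dvd hk (by omega) (by omega) ?_⟩
  · rw [show 3 * (2 * k) / 2 = 3 * k by omega, show 12 * (2 * k) = 8 * (3 * k) by ring]
    exact ZMod.addOrderOf_natCast_mul_self 8 (by omega)
  · rwa [Nat.mul_div_cancel_left k two_pos,
      show 12 * (2 * k) = 24 * k by ring] at h
end
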